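/- arXiv:2510.16330 — 2 statements merged into one kernel-verified Lean document; each statement's English description precedes it below -/
import Mathlib

section
/- With G^H_l constructed as in the context from a k-colored hypergraph G all of whose hyperedges have arity exactly k−1: there is a linear ordering of V(G^H_l) — placing first all copied vertices ∪_e V_i^e, then the vertices of V(G), then the vertices of V^ext — under which every vertex has l-outdegree at most |E(H)| · |V(H)|; consequently the l-degeneracy of G^H_l is bounded by a constant depending only on H and not on G. -/
open scoped Classical

noncomputable section

/-- A hypergraph: a finite vertex set and a finite set of hyperedges, with vertices in `ℕ`. -/
structure HGraph where
  verts : Finset ℕ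
  edges : Finset (Finset ℕ)

namespace HGraph

/-- Well-formedness: every hyperedge is a nonempty subset of the vertex set. -/
def Good (G : HGraph) : Prop := ∀ e ∈ G.edges, e ⊆ G.verts ∧ e.Nonempty

/-- The rank of a hypergraph: the maximum arity of a hyperedge. -/
def rank (G : HGraph) : ℕ := G.edges.sup Finset.card

/-- The induced `l`-trimmed subhypergraph of `G` on `S`. -/
def trim (G : HGraph) (S : Finset ℕ) (l : ℕ∞) : HGraph :=
  ⟨G.verts ∩ S,
    (G.edges.filter fun e => ((e \ S).card : ℕ∞) ≤ l ∧ (e ∩ S).Nonempty).image fun e => e ∩ S⟩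

/-- The degree of a vertex: the number of hyperedges containing it. -/
def degree (G : HGraph) (v : ℕ) : ℕ := (G.edges.filter fun e => v ∈ e).card

/-- The `l`-degeneracy of a hypergraph: the least `κ` such that every nonempty induced
`l`-trimmed subhypergraph has a vertex of degree at most `κ`. -/
def degeneracy (G : HGraph) (l : ℕ∞) : ℕ :=
  sInf {κ : ℕ | ∀ S ⊆ G.verts, S.Nonempty → ∃ v ∈ S, (G.trim S l).degree v ≤ κ}

/-- Two vertices are adjacent if some hyperedge contains both. -/
def Adj (G : HGraph) (u v : ℕ) : Prop := ∃ e ∈ G.edges, u ∈ e ∧ v ∈ e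

/-- A hypergraph is connected if any two vertices are joined by a path of adjacencies. -/
def Connected (G : HGraph) : Prop :=
  ∀ u ∈ G.verts, ∀ v ∈ G.verts, Relation.ReflTransGen G.Adj u v

/-- `D` is a connected component of `G`. -/
def IsComponent (G : HGraph) (D : Finset ℕ) : Prop :=
  ∃ v ∈ G.verts, D = G.verts.filter fun u => Relation.ReflTransGen G.Adj v u

/-- The induced subhypergraph (only hyperedges entirely inside `S`). -/
def induce (G : HGraph) (S : Finset ℕ) : HGraph :=
  ⟨G.verts ∩ S, G.edges.filter fun e => e ⊆ S⟩

end HGraph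

/-- `f` is a homomorphism from `H` to `G`. -/
def IsHom (H G : HGraph) (f : ℕ → ℕ) : Prop :=
  (∀ v ∈ H.verts, f v ∈ G.verts) ∧ ∀ e ∈ H.edges, e.image f ∈ G.edges

/-- `Hom(G,H)`: the number of homomorphisms from `H` to `G`
(normalized to be `0` off `V(H)` so that the set is finite). -/
def homCount (G H : HGraph) : ℕ :=
  Set.ncard {f : ℕ → ℕ | IsHom H G f ∧ ∀ v ∉ H.verts, f v = 0}

/-- `Homr(G,H)`: the number of arity-preserving homomorphisms from `H` to `G`. -/
def homrCount (G H : HGraph) : ℕ :=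
  Set.ncard {f : ℕ → ℕ | IsHom H G f ∧ (∀ e ∈ H.edges, (e.image f).card = e.card) ∧
    ∀ v ∉ H.verts, f v = 0}

/-- HGraph isomorphism. -/
def Isomorphic (H H' : HGraph) : Prop :=
  ∃ f : ℕ → ℕ, Set.BijOn f ↑H.verts ↑H'.verts ∧
    H'.edges = H.edges.image fun e => e.image f

/-- The quotient of `H` under the partition of `V(H)` into the fibers of `f`. -/
def quotientBy (H : HGraph) (f : ℕ → ℕ) : HGraph :=
  ⟨H.verts.image f, H.edges.image fun e => e.image f⟩

/-- `H'` is a quotient of `H` (by some partition of `V(H)`). -/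
def IsQuotient (H H' : HGraph) : Prop := ∃ f : ℕ → ℕ, H' = quotientBy H f

/-- Each fiber of `f` induces a connected (trimmed) subhypergraph of `H`. -/
def ContractMap (H : HGraph) (f : ℕ → ℕ) : Prop :=
  ∀ w : ℕ, (H.trim (H.verts.filter fun v => f v = w) ⊤).Connected

/-- `H'` belongs to the contract set `Q^c(H)`: it is a quotient of `H` by a partition
all of whose parts induce connected subhypergraphs of `H`. -/
def IsContractQuotient (H H' : HGraph) : Prop :=
  ∃ f : ℕ → ℕ, ContractMap H f ∧ H' = quotientBy H f

/-- `α(H')`: the number of partitions `τ` of `V(H)` with connected parts with `H/τ ≅ H'`. -/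
def alphaCount (H H' : HGraph) : ℕ :=
  Set.ncard {P : Finset (Finset ℕ) | ∃ f : ℕ → ℕ, ContractMap H f ∧
    Isomorphic (quotientBy H f) H' ∧
    P = (H.verts.image f).image fun w => H.verts.filter fun v => f v = w}

/-- `|Aut(H')|`: the number of automorphisms of `H'`. -/
def autCount (H' : HGraph) : ℕ :=
  Set.ncard {f : ℕ → ℕ | (∀ v ∉ H'.verts, f v = v) ∧ Set.BijOn f ↑H'.verts ↑H'.verts ∧
    H'.edges.image (fun e => e.image f) = H'.edges}

/-- The arc relation of the `l`-skeleton of the DAH obtained by ordering `G` by `π`. -/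
def SkelArc (G : HGraph) (π : ℕ → ℕ) (l : ℕ∞) (u v : ℕ) : Prop :=
  ∃ e ∈ G.edges, u ∈ e ∧ v ∈ e ∧ π u < π v ∧
    ((e.filter fun w => π w < π u).card : ℕ∞) ≤ l

/-- The `l`-outdegree of a vertex in the DAH `(G, π)`. -/
def loutdeg (G : HGraph) (π : ℕ → ℕ) (l : ℕ∞) (u : ℕ) : ℕ :=
  (G.verts.filter fun v => SkelArc G π l u v).card

/-- Vertices reachable from `v` by a directed path. -/
def Reach (Adj : ℕ → ℕ → Prop) (v : ℕ) : Set ℕ := {u | Relation.ReflTransGen Adj v u}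

/-- Vertices reachable from a set `A`. -/
def ReachSet (Adj : ℕ → ℕ → Prop) (A : Set ℕ) : Set ℕ :=
  {u | ∃ a ∈ A, Relation.ReflTransGen Adj a u}

/-- The sources of a DAG: vertices with no incoming arc. -/
def sourcesOf (V : Finset ℕ) (Adj : ℕ → ℕ → Prop) : Finset ℕ :=
  V.filter fun v => ¬ ∃ u ∈ V, Adj u v

/-- `b` lies on the (unique) path between `i` and `j` in `T`. -/
def OnPath {n : ℕ} (T : SimpleGraph (Fin n)) (i j b : Fin n) : Prop :=
  ∃ p : T.Walk i j, p.IsPath ∧ b ∈ p.support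

/-- `(T, β)` is a DAG-tree decomposition of the DAG `(V, Adj)`. -/
def IsDTD (V : Finset ℕ) (Adj : ℕ → ℕ → Prop) {n : ℕ}
    (T : SimpleGraph (Fin n)) (β : Fin n → Finset ℕ) : Prop :=
  T.IsTree ∧ (∀ i, β i ⊆ sourcesOf V Adj) ∧ (∀ s ∈ sourcesOf V Adj, ∃ i, s ∈ β i) ∧
    ∀ i j b, OnPath T i j b →
      ReachSet Adj ↑(β i) ∩ ReachSet Adj ↑(β j) ⊆ ReachSet Adj ↑(β b)

/-- The DAG-treewidth of the DAG `(V, Adj)`. -/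
def dagTreewidth (V : Finset ℕ) (Adj : ℕ → ℕ → Prop) : ℕ :=
  sInf {w : ℕ | ∃ (n : ℕ) (T : SimpleGraph (Fin n)) (β : Fin n → Finset ℕ),
    IsDTD V Adj T β ∧ ∀ i, (β i).card ≤ w}

/-- The `l`-DAG-treewidth of the DAH `(H, π)`. -/
def ldtwOriented (H : HGraph) (π : ℕ → ℕ) (l : ℕ∞) : ℕ :=
  dagTreewidth H.verts (SkelArc H π l)

/-- The `l`-DAG-treewidth of an undirected hypergraph:
the maximum over all acyclic orientations. -/
def ldtw (H : HGraph) (l : ℕ∞) : ℕ :=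
  sSup {w : ℕ | ∃ π : ℕ → ℕ, Set.InjOn π ↑H.verts ∧ w = ldtwOriented H π l}

/-- `f` is a DAH homomorphism from `(K, πK)` to `(G, πG)`. -/
def IsDAHHom (K : HGraph) (πK : ℕ → ℕ) (G : HGraph) (πG : ℕ → ℕ)
    (f : ℕ → ℕ) : Prop :=
  (∀ v ∈ K.verts, f v ∈ G.verts) ∧
    ∀ e ∈ K.edges, e.image f ∈ G.edges ∧
      ∀ u ∈ e, ∀ v ∈ e, πK u < πK v → πG (f u) < πG (f v)

/-- The number of DAH homomorphisms from `(K, πK)` to `(G, πG)`. -/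
def dahHomCount (G : HGraph) (πG : ℕ → ℕ) (K : HGraph) (πK : ℕ → ℕ) : ℕ :=
  Set.ncard {f : ℕ → ℕ | IsDAHHom K πK G πG f ∧ ∀ v ∉ K.verts, f v = 0}

/-- Two orderings of `H` give isomorphic acyclic orientations. -/
def OrientIso (H : HGraph) (π₁ π₂ : ℕ → ℕ) : Prop :=
  ∃ g : ℕ → ℕ, Set.BijOn g ↑H.verts ↑H.verts ∧
    (H.edges.image fun e => e.image g) = H.edges ∧
    ∀ u ∈ H.verts, ∀ v ∈ H.verts, (π₁ u < π₁ v ↔ π₂ (g u) < π₂ (g v))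

/-- The vertices of `H` that are `l`-reachable from the set `S` in the DAH `(H, π)`. -/
def reachClosure (H : HGraph) (π : ℕ → ℕ) (l : ℕ∞) (S : Set ℕ) : Finset ℕ :=
  H.verts.filter fun v => v ∈ ReachSet (SkelArc H π l) S

/-- `H⃗[S]_l`: the sub-DAH induced (0-trimmed) on the vertices `l`-reachable from `S`. -/
def subDAH (H : HGraph) (π : ℕ → ℕ) (l : ℕ∞) (S : Set ℕ) : HGraph :=
  H.trim (reachClosure H π l S) 0

/-- `B'` is a child of `B` in the tree `T` rooted at `root`. -/
def IsChild {n : ℕ} (T : SimpleGraph (Fin n)) (root B B' : Fin n) : Prop :=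
  T.Adj B B' ∧ OnPath T root B' B

/-- `Γ(B)`: the union of the bags in the subtree of `T` rooted at `B`. -/
def GammaSet {n : ℕ} (T : SimpleGraph (Fin n)) (root : Fin n)
    (β : Fin n → Finset ℕ) (B : Fin n) : Set ℕ :=
  {s | ∃ i, OnPath T root i B ∧ s ∈ β i}

/-- `ext(φ, K⃗, G⃗)` relative to the agreement domain `dom`: the number of DAH homomorphisms
from `(K, πK)` to `(G, πG)` that agree with `φ` on `V(K) ∩ dom`. -/
def extCount (K : HGraph) (πK : ℕ → ℕ) (G : HGraph) (πG : ℕ → ℕ)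
    (dom : Set ℕ) (φ : ℕ → ℕ) : ℕ :=
  Set.ncard {ψ : ℕ → ℕ | IsDAHHom K πK G πG ψ ∧ (∀ v ∉ K.verts, ψ v = 0) ∧
    ∀ v ∈ (↑K.verts : Set ℕ) ∩ dom, ψ v = φ v}

/-- The hyperedges `E_i` associated to a core `C` and a component `D`. -/
def obstructionEdges (H : HGraph) (C D : Finset ℕ) : Finset (Finset ℕ) :=
  H.edges.filter fun e => e ⊆ C ∪ D ∧ 1 < e.card

/-- `H` is an `l`-obstruction (a member of `𝓗_l`). -/
def IsLObstruction (l : ℕ∞) (H : HGraph) : Prop :=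
  ∃ k, 3 ≤ k ∧ ∃ C ⊆ H.verts, C.card = k ∧
    (∀ e ∈ (H.trim C l).edges, e.card ≤ 1) ∧
    (∀ D : Finset ℕ, (H.trim (H.verts \ C) ⊤).IsComponent D →
      ¬ C ⊆ (obstructionEdges H C D).biUnion id) ∧
    ∃ Dmap : ℕ → Finset ℕ, Set.InjOn Dmap ↑C ∧
      ∀ c ∈ C, (H.trim (H.verts \ C) ⊤).IsComponent (Dmap c) ∧
        C.erase c ⊆ (obstructionEdges H C (Dmap c)).biUnion id ∧
        ∀ e ∈ obstructionEdges H C (Dmap c), c ∉ e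

/-- `H` is `𝓗_l` ITS free: no induced ∞-trimmed subhypergraph is an `l`-obstruction. -/
def ITSFree (l : ℕ∞) (H : HGraph) : Prop :=
  ∀ S ⊆ H.verts, ¬ IsLObstruction l (H.trim S ⊤)

/-- The hypergraph `(Hv, He)` is an `l`-connector of `X ⊆ Hv`. -/
def IsConnector (l : ℕ∞) (Hv : Finset ℕ) (He : Finset (Finset ℕ)) (X : Finset ℕ) : Prop :=
  X ⊆ Hv ∧ HGraph.Connected ⟨Hv, He⟩ ∧
    (∀ e ∈ He, 2 ≤ (e ∩ X).card → l < ((e \ X).card : ℕ∞)) ∧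
    ∃ V' : Finset ℕ, (HGraph.trim ⟨Hv, He⟩ (Hv \ X) ⊤).IsComponent V' ∧
      ∀ xx ∈ X, ∃ v ∈ V', ∃ e ∈ He, xx ∈ e ∧ v ∈ e

/-- Witness data for membership of `H` in `𝓗_{l,k}`. -/
def InHlkWitness (l : ℕ∞) (k : ℕ) (H : HGraph)
    (x : ℕ → ℕ) (Vp : ℕ → Finset ℕ) (Ep : ℕ → Finset (Finset ℕ)) : Prop :=
  Set.InjOn x ↑(Finset.range k) ∧
  (∀ i < k, ∀ j < k, i ≠ j → Disjoint (Vp i) (Vp j)) ∧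
  (∀ i < k, Disjoint (Vp i) ((Finset.range k).image x)) ∧
  H.verts = (Finset.range k).image x ∪ (Finset.range k).biUnion Vp ∧
  (∀ i < k, ∀ j < k, i ≠ j → Disjoint (Ep i) (Ep j)) ∧
  H.edges = (Finset.range k).biUnion Ep ∧
  ∀ i < k,
    (∀ e ∈ Ep i, e ⊆ Vp i ∪ (((Finset.range k).image x).erase (x i))) ∧
    IsConnector l (Vp i ∪ (((Finset.range k).image x).erase (x i))) (Ep i)
      (((Finset.range k).image x).erase (x i))

/-- `H ∈ 𝓗_{l,k}`. -/
def InHlk (l : ℕ∞) (k : ℕ) (H : HGraph) : Prop :=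
  ∃ x Vp Ep, InHlkWitness l k H x Vp Ep

/-- The DAG `(V, Adj)` contains a `k`-reachable-cycle. -/
def HasReachCycle (V : Finset ℕ) (Adj : ℕ → ℕ → Prop) (k : ℕ) : Prop :=
  ∃ x y : ZMod k → ℕ, Function.Injective x ∧ Function.Injective y ∧
    (∀ i, x i ∈ V) ∧ (∀ i, y i ∈ V) ∧
    (∀ i, x i ∈ Reach Adj (y i) ∧ x (i + 1) ∈ Reach Adj (y i)) ∧
    ∀ v ∈ V, 2 ≤ (Set.range x ∩ Reach Adj v).ncard →
      ∃ i, Set.range x ∩ Reach Adj v = {x i, x (i + 1)}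

/-- `(x, y)` form a `k`-reachable-simplex in the DAG `(V, Adj)`. -/
def IsReachSimplexPair (V : Finset ℕ) (Adj : ℕ → ℕ → Prop) {k : ℕ}
    (x y : Fin k → ℕ) : Prop :=
  Function.Injective x ∧ Function.Injective y ∧
    (∀ i, x i ∈ V) ∧ (∀ i, y i ∈ V) ∧
    (∀ i j, j ≠ i → x j ∈ Reach Adj (y i)) ∧
    ¬ ∃ v ∈ V, ∀ i, x i ∈ Reach Adj v

/-- The DAG `(V, Adj)` contains a `k`-reachable-simplex. -/
def HasReachSimplex (V : Finset ℕ) (Adj : ℕ → ℕ → Prop) (k : ℕ) : Prop :=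
  ∃ x y : Fin k → ℕ, IsReachSimplexPair V Adj x y

/-- `F` is α-acyclic. -/
def IsAlphaAcyclic (F : HGraph) : Prop :=
  ∃ (n : ℕ) (T : SimpleGraph (Fin n)) (f : Fin n → Finset ℕ),
    T.IsTree ∧ Function.Injective f ∧ (∀ i, f i ∈ F.edges) ∧
    (∀ e ∈ F.edges, ∃ i, f i = e) ∧
    ∀ i j b, OnPath T i j b → f i ∩ f j ⊆ f b

/-- The reachability hypergraph of the DAG `(V, Adj)`. -/
def reachHypergraph (V : Finset ℕ) (Adj : ℕ → ℕ → Prop) : HGraph :=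
  ⟨V, (sourcesOf V Adj).image fun s => V.filter fun v => v ∈ Reach Adj s⟩

/-- The clique completion of a hypergraph. -/
def cliqueCompletion (H : HGraph) : SimpleGraph ℕ where
  Adj u v := u ≠ v ∧ ∃ e ∈ H.edges, u ∈ e ∧ v ∈ e
  symm := by
    constructor
    intro u v h
    obtain ⟨huv, e, he, hu, hv⟩ := h
    exact ⟨huv.symm, e, he, hv, hu⟩
  loopless := by
    constructor
    intro u h
    exact h.1 rfl

/-- `G` has an induced cycle on `n` vertices. -/
def HasInducedCycle (G : SimpleGraph ℕ) (n : ℕ) : Prop :=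
  ∃ f : ZMod n → ℕ, Function.Injective f ∧
    ∀ i j : ZMod n, G.Adj (f i) (f j) ↔ (j = i + 1 ∨ i = j + 1)

/-- The number of colorful homomorphisms from `H` to `G` under the coloring `c`
(with color set `{1, …, |V(H)|}`). -/
def colHomCount (G H : HGraph) (c : ℕ → ℕ) : ℕ :=
  Set.ncard {f : ℕ → ℕ | IsHom H G f ∧ (∀ v ∉ H.verts, f v = 0) ∧
    Set.BijOn (fun v => c (f v)) ↑H.verts ↑(Finset.Icc 1 H.verts.card)}

/-- The tensor product of hypergraphs (vertex pairs encoded by `Nat.pair`). -/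
def tensor (G H : HGraph) : HGraph :=
  ⟨(G.verts ×ˢ H.verts).image fun p => Nat.pair p.1 p.2,
    ((G.verts ×ˢ H.verts).image fun p => Nat.pair p.1 p.2).powerset.filter fun e =>
      (e.image fun m => (Nat.unpair m).1) ∈ G.edges ∧
      (e.image fun m => (Nat.unpair m).2) ∈ H.edges⟩

/-- `Sub(G,H)`: the number of subhypergraphs of `G` isomorphic to `H`. -/
def subCount (G H : HGraph) : ℕ :=
  Set.ncard {p : Finset ℕ × Finset (Finset ℕ) |
    p.1 ⊆ G.verts ∧ (∀ e ∈ p.2, e ∈ G.edges ∧ e ⊆ p.1) ∧ Isomorphic H ⟨p.1, p.2⟩}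

/-- Vertex renaming used in the construction of `G^H_l`:
core vertices go to the matching vertex of the colorful hyperedge `e` of `G`,
vertices of `H'` outside the core go to their fresh copy indexed by `e`, and
vertices outside `H'` go to their unique copy. -/
def liftVert (S X : Finset ℕ) (π c : ℕ → ℕ) (e : Finset ℕ) (v : ℕ) : ℕ :=
  if v ∈ X then Nat.pair 0 ((e.filter fun u => c u = π v).sum id)
  else if v ∈ S then Nat.pair 2 (Nat.pair (Encodable.encode e) v)
  else Nat.pair 1 v

/-- The hypergraph `G^H_l` from the hardness construction. -/
def GHl (H G : HGraph) (S X : Finset ℕ) (Vp : ℕ → Finset ℕ) (π c : ℕ → ℕ)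
    (k : ℕ) : HGraph :=
  ⟨(G.verts.image fun v => Nat.pair 0 v) ∪ ((H.verts \ S).image fun v => Nat.pair 1 v) ∪
      (Finset.range k).biUnion fun i =>
        (G.edges.filter fun e => e.card = k - 1 ∧ e.image c = (Finset.range k).erase i).biUnion
          fun e => (Vp i).image fun v => Nat.pair 2 (Nat.pair (Encodable.encode e) v),
    ((H.edges.filter fun e => e ⊆ H.verts \ S).image fun e => e.image fun v => Nat.pair 1 v) ∪
      (Finset.range k).biUnion fun i =>
        (G.edges.filter fun e => e.card = k - 1 ∧ e.image c = (Finset.range k).erase i).biUnion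
          fun e =>
            (H.edges.filter fun e' => ¬ e' ⊆ H.verts \ S ∧
                e' ⊆ X ∪ Vp i ∪ (H.verts \ S)).image
              fun e' => e'.image (liftVert S X π c e)⟩

/-- The coloring of `G^H_l`. -/
def GHlColor (π c : ℕ → ℕ) (m : ℕ) : ℕ :=
  if (Nat.unpair m).1 = 0 then c (Nat.unpair m).2
  else if (Nat.unpair m).1 = 1 then π (Nat.unpair m).2
  else π (Nat.unpair (Nat.unpair m).2).2

/-- The grouping of the vertices of `G^H_l`: copied vertices first,
then the vertices of `G`, then the vertices of `V^ext`. -/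
def GHlGroup (m : ℕ) : ℕ :=
  if (Nat.unpair m).1 = 2 then 0 else if (Nat.unpair m).1 = 0 then 1 else 2

/-!
Order `G^H_l` with the copied vertices first, then `V(G)`, then `V^ext`. A copied vertex of
`V_i^e` lies only in hyperedges lifted from `H` along `e`, so its out-neighbours are lifts of
vertices of `H`. A vertex of `G` or of `V^ext` has all its out-neighbours in `V^ext`: a hyperedge
through two vertices of `G` is lifted from a hyperedge of `H` meeting `X` twice, which by the
connector condition has more than `l` vertices in the `V_i`; their copies all precede both
vertices, so the hyperedge contributes no arc between them. Hence every `l`-outdegree is at most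
`|V(H)|`. Finally, the first vertex `v` of an induced `l`-trimmed subhypergraph has degree at most
`2 ^ outdeg v`, since a trimmed hyperedge through `v` consists of `v` and out-neighbours of `v`.
-/

namespace HGraph

variable (G : HGraph) (ρ : ℕ → ℕ) (l : ℕ∞)

theorem loutdeg_le_card_of_forall_skelArc {u : ℕ} (T : Finset ℕ)
    (hT : ∀ v ∈ G.verts, SkelArc G ρ l u v → v ∈ T) : loutdeg G ρ l u ≤ T.card :=
  Finset.card_le_card fun v hv => hT v (Finset.mem_filter.1 hv).1 (Finset.mem_filter.1 hv).2

theorem loutdeg_eq_zero_of_edges_eq_empty (hE : G.edges = ∅) (u : ℕ) : loutdeg G ρ l u = 0 := by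
  simp [loutdeg, SkelArc, hE]

variable {G ρ l}

theorem degree_trim_le_two_pow_loutdeg (hρ : Set.InjOn ρ ↑G.verts) {S : Finset ℕ}
    (hS : S ⊆ G.verts) {v : ℕ} (hv : v ∈ S) (hmin : ∀ w ∈ S, ρ v ≤ ρ w) :
    (G.trim S l).degree v ≤ 2 ^ loutdeg G ρ l v := by
  have herase : ∀ f ∈ (G.trim S l).edges.filter (v ∈ ·),
      f.erase v ∈ (G.verts.filter fun w => SkelArc G ρ l v w).powerset := by
    intro f hf
    obtain ⟨hf, hvf⟩ := Finset.mem_filter.1 hf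
    obtain ⟨e, ⟨he, htrim, -⟩, rfl⟩ := by
      simpa only [trim, Finset.mem_image, Finset.mem_filter] using hf
    refine Finset.mem_powerset.2 fun w hw => ?_
    obtain ⟨hwv, hwe, hwS⟩ : w ≠ v ∧ w ∈ e ∧ w ∈ S := by simpa using hw
    have hlt : ρ v < ρ w :=
      (hmin w hwS).lt_of_ne fun h => hwv (hρ (hS hwS) (hS hv) h.symm)
    have hbefore : e.filter (fun w' => ρ w' < ρ v) ⊆ e \ S := fun a ha => by
      obtain ⟨hae, hav⟩ := Finset.mem_filter.1 ha
      exact Finset.mem_sdiff.2 ⟨hae, fun haS => (hmin a haS).not_gt hav⟩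
    exact Finset.mem_filter.2 ⟨hS hwS, e, he, (Finset.mem_inter.1 hvf).1, hwe, hlt,
      (Nat.cast_le.2 (Finset.card_le_card hbefore)).trans htrim⟩
  have hinj : Set.InjOn (fun f : Finset ℕ => f.erase v) ↑((G.trim S l).edges.filter (v ∈ ·)) :=
    fun f₁ hf₁ f₂ hf₂ h => by
      rw [← Finset.insert_erase (Finset.mem_filter.1 hf₁).2,
        ← Finset.insert_erase (Finset.mem_filter.1 hf₂).2]
      exact congrArg (insert v) h
  calc (G.trim S l).degree v ≤ _ := Finset.card_le_card_of_injOn _ herase hinj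
    _ = 2 ^ loutdeg G ρ l v := Finset.card_powerset _

theorem degeneracy_le_two_pow (hρ : Set.InjOn ρ ↑G.verts) {d : ℕ}
    (hd : ∀ v ∈ G.verts, loutdeg G ρ l v ≤ d) : G.degeneracy l ≤ 2 ^ d := by
  refine Nat.sInf_le fun S hS hne => ?_
  obtain ⟨v, hv, hmin⟩ := Finset.exists_min_image S ρ hne
  exact ⟨v, hv, (degree_trim_le_two_pow_loutdeg hρ hS hv hmin).trans
    (Nat.pow_le_pow_right two_pos (hd v (hS hv)))⟩

end HGraph

theorem exists_injOn_lt_of_lt (V : Finset ℕ) (g : ℕ → ℕ) :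
    ∃ ρ : ℕ → ℕ, Set.InjOn ρ ↑V ∧ ∀ u ∈ V, ∀ v ∈ V, g u < g v → ρ u < ρ v := by
  set N := V.sup id
  have hN : ∀ m ∈ V, m < N + 1 := fun m hm => Nat.lt_succ_of_le (Finset.le_sup (f := id) hm)
  refine ⟨fun m => g m * (N + 1) + m, fun u hu v hv h => ?_, fun u hu v hv h => ?_⟩
  · simpa [Nat.mul_comm, Nat.mul_add_mod, Nat.mod_eq_of_lt (hN u hu),
      Nat.mod_eq_of_lt (hN v hv)] using congrArg (· % (N + 1)) h
  · have := hN u hu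
    calc g u * (N + 1) + u < (g u + 1) * (N + 1) := by rw [add_one_mul]; omega
      _ ≤ g v * (N + 1) := Nat.mul_le_mul_right _ h
      _ ≤ g v * (N + 1) + v := Nat.le_add_right _ _

namespace InHlkWitness

variable {l : ℕ∞} {k : ℕ} {K : HGraph} {x : ℕ → ℕ} {Vp : ℕ → Finset ℕ}
  {Ep : ℕ → Finset (Finset ℕ)}

theorem union_subset_verts (hW : InHlkWitness l k K x Vp Ep) {i : ℕ} (hi : i < k) :
    (Finset.range k).image x ∪ Vp i ⊆ K.verts := by
  obtain ⟨-, -, -, hverts, -⟩ := hW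
  rw [hverts]
  exact Finset.union_subset_union_right
    (Finset.subset_biUnion_of_mem Vp (Finset.mem_range.2 hi))

/-- The connector condition (ii), transported from `X ∖ {x_i}` to `X`: a hyperedge of `E_i`
avoids `x_i` and its other vertices lie in `V_i`, which is disjoint from `X`. -/
theorem lt_card_sdiff (hW : InHlkWitness l k K x Vp Ep) {f : Finset ℕ} (hf : f ∈ K.edges)
    (hfX : 2 ≤ (f ∩ (Finset.range k).image x).card) :
    l < ((f \ (Finset.range k).image x).card : ℕ∞) := by
  obtain ⟨-, -, hVX, -, -, hedges, hcon⟩ := hW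
  rw [hedges] at hf
  obtain ⟨i, hi, hfi⟩ := Finset.mem_biUnion.1 hf
  have hi := Finset.mem_range.1 hi
  obtain ⟨hsub, -, -, hlarge, -⟩ := hcon i hi
  have hsplit : ∀ a ∈ f, a ∈ Vp i ∧ a ∉ (Finset.range k).image x ∨
      a ∈ ((Finset.range k).image x).erase (x i) := fun a ha =>
    (Finset.mem_union.1 (hsub f hfi ha)).imp
      (fun haV => ⟨haV, Finset.disjoint_left.1 (hVX i hi) haV⟩) id
  have hinter : f ∩ (Finset.range k).image x ⊆ f ∩ ((Finset.range k).image x).erase (x i) :=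
    fun a ha => by
      obtain ⟨haf, haX⟩ := Finset.mem_inter.1 ha
      refine Finset.mem_inter.2 ⟨haf, ?_⟩
      rcases hsplit a haf with ⟨-, haX'⟩ | h
      · exact absurd haX haX'
      · exact h
  have hsdiff : f \ ((Finset.range k).image x).erase (x i) ⊆ f \ (Finset.range k).image x :=
    fun a ha => by
      obtain ⟨haf, haX⟩ := Finset.mem_sdiff.1 ha
      refine Finset.mem_sdiff.2 ⟨haf, ?_⟩
      rcases hsplit a haf with ⟨-, haX'⟩ | h
      · exact haX'
      · exact absurd h haX
  exact (hlarge f hfi (hfX.trans (Finset.card_le_card hinter))).trans_le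
    (Nat.cast_le.2 (Finset.card_le_card hsdiff))

end InHlkWitness

section GHl

variable {H G : HGraph} {S X : Finset ℕ} {Vp : ℕ → Finset ℕ} {π c : ℕ → ℕ} {k : ℕ}

@[simp] theorem GHlGroup_pair_zero (a : ℕ) : GHlGroup (Nat.pair 0 a) = 1 := by
  simp [GHlGroup]

@[simp] theorem GHlGroup_pair_one (a : ℕ) : GHlGroup (Nat.pair 1 a) = 2 := by
  simp [GHlGroup]

@[simp] theorem GHlGroup_pair_two (a : ℕ) : GHlGroup (Nat.pair 2 a) = 0 := by
  simp [GHlGroup]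

theorem mem_GHl_verts {w : ℕ} : w ∈ (GHl H G S X Vp π c k).verts ↔
    (∃ a ∈ G.verts, Nat.pair 0 a = w) ∨ (∃ a ∈ H.verts \ S, Nat.pair 1 a = w) ∨
    ∃ i < k, ∃ e ∈ G.edges, (e.card = k - 1 ∧ e.image c = (Finset.range k).erase i) ∧
      ∃ b ∈ Vp i, Nat.pair 2 (Nat.pair (Encodable.encode e) b) = w := by
  simp only [GHl, Finset.mem_union, Finset.mem_image, Finset.mem_biUnion, Finset.mem_filter,
    Finset.mem_range, or_assoc, and_assoc]

theorem mem_GHl_edges {E : Finset ℕ} : E ∈ (GHl H G S X Vp π c k).edges ↔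
    (∃ e₀ ∈ H.edges, e₀ ⊆ H.verts \ S ∧ e₀.image (Nat.pair 1) = E) ∨
    ∃ i < k, ∃ e ∈ G.edges, (e.card = k - 1 ∧ e.image c = (Finset.range k).erase i) ∧
      ∃ e' ∈ H.edges, (¬ e' ⊆ H.verts \ S ∧ e' ⊆ X ∪ Vp i ∪ (H.verts \ S)) ∧
        e'.image (liftVert S X π c e) = E := by
  simp only [GHl, Finset.mem_union, Finset.mem_image, Finset.mem_biUnion, Finset.mem_filter,
    Finset.mem_range, and_assoc]

theorem GHl_edges_eq_empty (hH : H.edges = ∅) : (GHl H G S X Vp π c k).edges = ∅ := by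
  ext E
  simp [GHl, hH]

end GHl

section liftVert

variable {S X : Finset ℕ} {π c : ℕ → ℕ} {e : Finset ℕ} {v : ℕ}

theorem liftVert_of_notMem_of_mem (hX : v ∉ X) (hS : v ∈ S) :
    liftVert S X π c e v = Nat.pair 2 (Nat.pair (Encodable.encode e) v) := by
  simp [liftVert, hX, hS]

theorem mem_of_liftVert_eq_pair_zero {a : ℕ} (h : liftVert S X π c e v = Nat.pair 0 a) :
    v ∈ X := by
  by_contra hX
  unfold liftVert at h
  split_ifs at h <;> simp [Nat.pair_eq_pair] at h

theorem eq_of_liftVert_eq_pair_two {e₀ : Finset ℕ} {b : ℕ}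
    (h : liftVert S X π c e v = Nat.pair 2 (Nat.pair (Encodable.encode e₀) b)) : e = e₀ := by
  unfold liftVert at h
  split_ifs at h <;> simp [Nat.pair_eq_pair] at h
  exact h.1

end liftVert

section GHlOutdegree

variable {l : ℕ∞} {k : ℕ} {H G : HGraph} {S : Finset ℕ} {x : ℕ → ℕ} {Vp : ℕ → Finset ℕ}
  {Ep : ℕ → Finset (Finset ℕ)} {π c ρ : ℕ → ℕ}

theorem card_inter_le_one_of_card_filter_le (hW : InHlkWitness l k (H.trim S ⊤) x Vp Ep)
    (hρ : ∀ u ∈ (GHl H G S ((Finset.range k).image x) Vp π c k).verts,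
      ∀ v ∈ (GHl H G S ((Finset.range k).image x) Vp π c k).verts,
        GHlGroup u < GHlGroup v → ρ u < ρ v)
    {i : ℕ} (hi : i < k) {e : Finset ℕ} (he : e ∈ G.edges)
    (hcol : e.card = k - 1 ∧ e.image c = (Finset.range k).erase i)
    {e' : Finset ℕ} (he' : e' ∈ H.edges)
    (hsub : e' ⊆ (Finset.range k).image x ∪ Vp i ∪ (H.verts \ S))
    {u : ℕ} (hu : u ∈ (GHl H G S ((Finset.range k).image x) Vp π c k).verts)
    (hgu : 0 < GHlGroup u)
    (hl : (((e'.image (liftVert S ((Finset.range k).image x) π c e)).filter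
      (fun w => ρ w < ρ u)).card : ℕ∞) ≤ l) :
    (e' ∩ (Finset.range k).image x).card ≤ 1 := by
  set X := (Finset.range k).image x
  by_contra! hX
  have hXS : X ⊆ S := fun a ha =>
    (Finset.mem_inter.1 (hW.union_subset_verts (i := i) hi (Finset.mem_union_left _ ha))).2
  have hinter : e' ∩ S ∩ X = e' ∩ X := by
    rw [Finset.inter_assoc, Finset.inter_eq_right.2 hXS]
  have htrim : e' ∩ S ∈ (H.trim S ⊤).edges := by
    obtain ⟨a, ha⟩ := Finset.card_pos.1 (Nat.zero_lt_of_lt hX)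
    exact Finset.mem_image.2 ⟨e', Finset.mem_filter.2 ⟨he', le_top,
      ⟨a, Finset.mem_of_mem_inter_left (hinter ▸ ha)⟩⟩, rfl⟩
  have hcopies : Set.MapsTo (liftVert S X π c e) ↑((e' ∩ S) \ X)
      ↑((e'.image (liftVert S X π c e)).filter fun w => ρ w < ρ u) := by
    intro b hb
    obtain ⟨⟨hbe, hbS⟩, hbX⟩ : (b ∈ e' ∧ b ∈ S) ∧ b ∉ X := by simpa using hb
    have hbV : b ∈ Vp i := by
      simpa [hbX, hbS] using hsub hbe
    have hcopy : Nat.pair 2 (Nat.pair (Encodable.encode e) b) ∈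
        (GHl H G S X Vp π c k).verts :=
      mem_GHl_verts.2 (Or.inr (Or.inr ⟨i, hi, e, he, hcol, b, hbV, rfl⟩))
    rw [Finset.mem_coe, liftVert_of_notMem_of_mem hbX hbS]
    exact Finset.mem_filter.2 ⟨liftVert_of_notMem_of_mem hbX hbS ▸ Finset.mem_image_of_mem _ hbe,
      hρ _ hcopy u hu (by simpa using hgu)⟩
  have hinj : Set.InjOn (liftVert S X π c e) ↑((e' ∩ S) \ X) := by
    intro b₁ hb₁ b₂ hb₂ h
    obtain ⟨⟨-, hb₁S⟩, hb₁X⟩ : (b₁ ∈ e' ∧ b₁ ∈ S) ∧ b₁ ∉ X := by simpa using hb₁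
    obtain ⟨⟨-, hb₂S⟩, hb₂X⟩ : (b₂ ∈ e' ∧ b₂ ∈ S) ∧ b₂ ∉ X := by simpa using hb₂
    rw [liftVert_of_notMem_of_mem hb₁X hb₁S, liftVert_of_notMem_of_mem hb₂X hb₂S] at h
    simpa [Nat.pair_eq_pair] using h
  have hlarge := hW.lt_card_sdiff htrim (hinter ▸ hX)
  exact (hlarge.trans_le (Nat.cast_le.2 (Finset.card_le_card_of_injOn _ hcopies hinj))).not_ge hl

theorem skelArc_GHl_mem_ext (hW : InHlkWitness l k (H.trim S ⊤) x Vp Ep)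
    (hρ : ∀ u ∈ (GHl H G S ((Finset.range k).image x) Vp π c k).verts,
      ∀ v ∈ (GHl H G S ((Finset.range k).image x) Vp π c k).verts,
        GHlGroup u < GHlGroup v → ρ u < ρ v)
    {u v : ℕ} (hu : u ∈ (GHl H G S ((Finset.range k).image x) Vp π c k).verts)
    (hgu : 0 < GHlGroup u) (hv : v ∈ (GHl H G S ((Finset.range k).image x) Vp π c k).verts)
    (harc : SkelArc (GHl H G S ((Finset.range k).image x) Vp π c k) ρ l u v) :
    v ∈ (H.verts \ S).image (Nat.pair 1) := by
  obtain ⟨E, hE, huE, hvE, hlt, hl⟩ := harc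
  have hgv : GHlGroup u ≤ GHlGroup v := le_of_not_gt fun h => (hρ v hv u hu h).not_gt hlt
  rcases mem_GHl_verts.1 hv with ⟨b, -, rfl⟩ | ⟨b, hb, rfl⟩ | ⟨_, -, _, -, -, _, -, rfl⟩
  · rcases mem_GHl_verts.1 hu with ⟨a, -, rfl⟩ | ⟨a, -, rfl⟩ | ⟨_, -, _, -, -, _, -, rfl⟩
    · exfalso
      rcases mem_GHl_edges.1 hE with ⟨e₀, -, -, rfl⟩ | ⟨i, hi, e, he, hcol, e', he', ⟨-, hsub⟩, rfl⟩
      · obtain ⟨_, -, h⟩ := Finset.mem_image.1 huE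
        simp [Nat.pair_eq_pair] at h
      · obtain ⟨a', ha', ha⟩ := Finset.mem_image.1 huE
        obtain ⟨b', hb', hb⟩ := Finset.mem_image.1 hvE
        have hne : a' ≠ b' := by
          rintro rfl
          exact hlt.ne (by rw [← ha, ← hb])
        have htwo : 1 < (e' ∩ (Finset.range k).image x).card :=
          Finset.one_lt_card.2 ⟨a', Finset.mem_inter.2 ⟨ha', mem_of_liftVert_eq_pair_zero ha⟩,
            b', Finset.mem_inter.2 ⟨hb', mem_of_liftVert_eq_pair_zero hb⟩, hne⟩
        exact htwo.not_ge (card_inter_le_one_of_card_filter_le hW hρ hi he hcol he' hsub hu hgu hl)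
    · simp at hgv
    · simp at hgu
  · exact Finset.mem_image_of_mem _ hb
  · simp only [GHlGroup_pair_two] at hgv
    omega

theorem skelArc_GHl_copy_mem (hW : InHlkWitness l k (H.trim S ⊤) x Vp Ep)
    {e₀ : Finset ℕ} {b v : ℕ}
    (harc : SkelArc (GHl H G S ((Finset.range k).image x) Vp π c k) ρ l
      (Nat.pair 2 (Nat.pair (Encodable.encode e₀) b)) v) :
    v ∈ H.verts.image (liftVert S ((Finset.range k).image x) π c e₀) := by
  obtain ⟨E, hE, huE, hvE, -⟩ := harc
  rcases mem_GHl_edges.1 hE with ⟨e₁, -, -, rfl⟩ | ⟨i, hi, e, -, -, e', -, ⟨-, hsub⟩, rfl⟩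
  · obtain ⟨_, -, h⟩ := Finset.mem_image.1 huE
    simp [Nat.pair_eq_pair] at h
  · obtain ⟨_, -, ha⟩ := Finset.mem_image.1 huE
    obtain rfl := eq_of_liftVert_eq_pair_two ha
    have he'H : e' ⊆ H.verts := hsub.trans (Finset.union_subset
      ((hW.union_subset_verts hi).trans Finset.inter_subset_left) Finset.sdiff_subset)
    exact Finset.image_subset_image he'H hvE

theorem loutdeg_GHl_le_card_verts (hW : InHlkWitness l k (H.trim S ⊤) x Vp Ep)
    (hρ : ∀ u ∈ (GHl H G S ((Finset.range k).image x) Vp π c k).verts,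
      ∀ v ∈ (GHl H G S ((Finset.range k).image x) Vp π c k).verts,
        GHlGroup u < GHlGroup v → ρ u < ρ v)
    {u : ℕ} (hu : u ∈ (GHl H G S ((Finset.range k).image x) Vp π c k).verts) :
    loutdeg (GHl H G S ((Finset.range k).image x) Vp π c k) ρ l u ≤ H.verts.card := by
  have hext (hgu : 0 < GHlGroup u) :
      loutdeg (GHl H G S ((Finset.range k).image x) Vp π c k) ρ l u ≤ H.verts.card :=
    calc _ ≤ ((H.verts \ S).image (Nat.pair 1)).card :=
          HGraph.loutdeg_le_card_of_forall_skelArc _ _ _ _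
            fun _ hv harc => skelArc_GHl_mem_ext hW hρ hu hgu hv harc
      _ ≤ (H.verts \ S).card := Finset.card_image_le
      _ ≤ H.verts.card := Finset.card_le_card Finset.sdiff_subset
  rcases mem_GHl_verts.1 hu with ⟨a, -, rfl⟩ | ⟨a, -, rfl⟩ | ⟨_, -, e, -, -, b, -, rfl⟩
  · exact hext (by simp)
  · exact hext (by simp)
  · exact (HGraph.loutdeg_le_card_of_forall_skelArc _ _ _ _
      fun _ _ harc => skelArc_GHl_copy_mem hW harc).trans Finset.card_image_le

theorem loutdeg_GHl_le_card_edges_mul_card_verts (hW : InHlkWitness l k (H.trim S ⊤) x Vp Ep)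
    (hρ : ∀ u ∈ (GHl H G S ((Finset.range k).image x) Vp π c k).verts,
      ∀ v ∈ (GHl H G S ((Finset.range k).image x) Vp π c k).verts,
        GHlGroup u < GHlGroup v → ρ u < ρ v)
    {u : ℕ} (hu : u ∈ (GHl H G S ((Finset.range k).image x) Vp π c k).verts) :
    loutdeg (GHl H G S ((Finset.range k).image x) Vp π c k) ρ l u ≤
      H.edges.card * H.verts.card := by
  rcases H.edges.eq_empty_or_nonempty with hE | hE
  · simp [HGraph.loutdeg_eq_zero_of_edges_eq_empty _ _ _ (GHl_edges_eq_empty hE)]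
  · exact (loutdeg_GHl_le_card_verts hW hρ hu).trans (Nat.le_mul_of_pos_left _ hE.card_pos)

end GHlOutdegree

theorem stmt14_general (l : ℕ∞) (k : ℕ) (H : HGraph)
    (S : Finset ℕ)
    (x : ℕ → ℕ) (Vp : ℕ → Finset ℕ) (Ep : ℕ → Finset (Finset ℕ))
    (hW : InHlkWitness l k (H.trim S ⊤) x Vp Ep)
    (π : ℕ → ℕ) :
    ∃ C : ℕ, ∀ G : HGraph, G.Good →
      ∀ c : ℕ → ℕ, Set.MapsTo c ↑G.verts ↑(Finset.range k) →
        (∀ e ∈ G.edges, e.card = k - 1) →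
        (∃ ρ : ℕ → ℕ,
          Set.InjOn ρ ↑(GHl H G S ((Finset.range k).image x) Vp π c k).verts ∧
          (∀ u ∈ (GHl H G S ((Finset.range k).image x) Vp π c k).verts,
            ∀ v ∈ (GHl H G S ((Finset.range k).image x) Vp π c k).verts,
              GHlGroup u < GHlGroup v → ρ u < ρ v) ∧
          ∀ v ∈ (GHl H G S ((Finset.range k).image x) Vp π c k).verts,
            loutdeg (GHl H G S ((Finset.range k).image x) Vp π c k) ρ l v ≤
              H.edges.card * H.verts.card) ∧
        (GHl H G S ((Finset.range k).image x) Vp π c k).degeneracy l ≤ C := by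
  refine ⟨2 ^ (H.edges.card * H.verts.card), fun G _ c _ _ => ?_⟩
  obtain ⟨ρ, hinj, hρ⟩ :=
    exists_injOn_lt_of_lt (GHl H G S ((Finset.range k).image x) Vp π c k).verts GHlGroup
  have hout : ∀ v ∈ (GHl H G S ((Finset.range k).image x) Vp π c k).verts,
      loutdeg (GHl H G S ((Finset.range k).image x) Vp π c k) ρ l v ≤
        H.edges.card * H.verts.card :=
    fun _ hv => loutdeg_GHl_le_card_edges_mul_card_verts hW hρ hv
  exact ⟨⟨ρ, hinj, hρ, hout⟩, HGraph.degeneracy_le_two_pow hinj hout⟩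

theorem stmt14 (l : ℕ∞) (k h : ℕ) (H : HGraph) (hH : H.Good)
    (hh : h = H.verts.card)
    (S : Finset ℕ) (hS : S ⊆ H.verts)
    (x : ℕ → ℕ) (Vp : ℕ → Finset ℕ) (Ep : ℕ → Finset (Finset ℕ))
    (hW : InHlkWitness l k (H.trim S ⊤) x Vp Ep)
    (π : ℕ → ℕ) (hπ : Set.BijOn π ↑H.verts ↑(Finset.range h))
    (hπx : ∀ i < k, π (x i) = i) :
    ∃ C : ℕ, ∀ G : HGraph, G.Good →
      ∀ c : ℕ → ℕ, Set.MapsTo c ↑G.verts ↑(Finset.range k) →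
        (∀ e ∈ G.edges, e.card = k - 1) →
        (∃ ρ : ℕ → ℕ,
          Set.InjOn ρ ↑(GHl H G S ((Finset.range k).image x) Vp π c k).verts ∧
          (∀ u ∈ (GHl H G S ((Finset.range k).image x) Vp π c k).verts,
            ∀ v ∈ (GHl H G S ((Finset.range k).image x) Vp π c k).verts,
              GHlGroup u < GHlGroup v → ρ u < ρ v) ∧
          ∀ v ∈ (GHl H G S ((Finset.range k).image x) Vp π c k).verts,
            loutdeg (GHl H G S ((Finset.range k).image x) Vp π c k) ρ l v ≤
              H.edges.card * H.verts.card) ∧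
        (GHl H G S ((Finset.range k).image x) Vp π c k).degeneracy l ≤ C :=
  stmt14_general l k H S x Vp Ep hW π

end
end

section
/- Let H_1,…,H_k be pairwise non-isomorphic hypergraphs and let c_1,…,c_k be nonzero rational constants. Then there exist hypergraphs F_1,…,F_k such that the k × k matrix M with entries M_{i,j} = c_j · Hom(F_i, H_j) for 1 ≤ i,j ≤ k is invertible. -/
open scoped Classical

noncomputable section

/-!
The vectors `(Hom(F, H_j))_j`, for `F` ranging over all hypergraphs, contain the all-ones
vector (`F` a single vertex with a loop) and are closed under pointwise products
(`Hom(F ⊗ G, H) = Hom(F, H) Hom(G, H)`). By Lovász's argument, `Hom(·, A) = Hom(·, B)` forces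
`A ≅ B`: Möbius inversion over subhypergraphs turns hom counts into counts of surjective
homomorphisms, and surjections in both directions are isomorphisms. So for non-isomorphic `H_j`
these vectors generate a point-separating subalgebra of `ℚ^k`, which is all of `ℚ^k`; hence `k` of
them form an invertible matrix, and scaling its columns by the nonzero `c_j` keeps it invertible.
-/

section LinearAlgebra

variable {K ι : Type*} [Field K] [Fintype ι]

theorem Subalgebra.eq_top_of_separatesPoints (A : Subalgebra K (ι → K))
    (hsep : ∀ i j, i ≠ j → ∃ f ∈ A, f i ≠ f j) : A = ⊤ := by
  have hsingle : ∀ i, Pi.single i 1 ∈ A := by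
    intro i
    have : ∀ j, ∃ f ∈ A, j ≠ i → f j ≠ f i := fun j => by
      by_cases hj : j = i
      · exact ⟨1, A.one_mem, fun h => absurd hj h⟩
      · obtain ⟨f, hf, hne⟩ := hsep j i hj
        exact ⟨f, hf, fun _ => hne⟩
    choose f hfA hf using this
    -- `w` vanishes off `i`: its `j`-th factor is killed at `j`.
    set w : ι → K := ∏ j ∈ Finset.univ.erase i, (f j - algebraMap K (ι → K) (f j j))
    have hwA : w ∈ A := A.prod_mem fun j _ => A.sub_mem (hfA j) (A.algebraMap_mem _)
    have hw : ∀ l, w l = ∏ j ∈ Finset.univ.erase i, (f j l - f j j) := fun l => by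
      simp [w, Finset.prod_apply]
    have hwi : w i ≠ 0 := by
      rw [hw]
      exact Finset.prod_ne_zero_iff.mpr fun j hj =>
        sub_ne_zero_of_ne (hf j (Finset.ne_of_mem_erase hj)).symm
    have : Pi.single i 1 = (w i)⁻¹ • w := by
      ext l
      by_cases hl : l = i
      · subst hl
        simp [inv_mul_cancel₀ hwi]
      · rw [Pi.smul_apply, hw l,
          Finset.prod_eq_zero (Finset.mem_erase.mpr ⟨hl, Finset.mem_univ l⟩) (sub_self _)]
        simp [hl]
    rw [this]
    exact A.smul_mem hwA _
  refine eq_top_iff.mpr fun g _ => ?_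
  rw [pi_eq_sum_univ' g]
  exact A.sum_mem fun i _ => A.smul_mem (hsingle i) _

theorem exists_isUnit_matrix_of_span_eq_top [DecidableEq ι] {T : Set (ι → K)}
    (hT : Submodule.span K T = ⊤) : ∃ r : ι → ι → K, (∀ i, r i ∈ T) ∧ IsUnit (Matrix.of r) := by
  let b := Module.Basis.ofSpan hT.ge
  let b' := b.reindex (b.indexEquiv (Pi.basisFun K ι))
  refine ⟨b', fun i => Module.Basis.ofSpan_subset hT.ge ⟨_, (b.reindex_apply _ i).symm⟩, ?_⟩
  exact Matrix.linearIndependent_rows_iff_isUnit.mp b'.linearIndependent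

end LinearAlgebra

def homSet (G H : HGraph) : Set (ℕ → ℕ) :=
  {f | IsHom H G f ∧ ∀ v ∉ H.verts, f v = 0}

theorem homCount_eq_ncard_homSet (G H : HGraph) : homCount G H = (homSet G H).ncard := rfl

theorem finite_setOf_mapsTo_of_eq_zero (V W : Finset ℕ) :
    {f : ℕ → ℕ | (∀ v ∈ V, f v ∈ W) ∧ ∀ v ∉ V, f v = 0}.Finite := by
  refine (Set.finite_range fun g : V → W => fun v => if h : v ∈ V then (g ⟨v, h⟩ : ℕ) else 0).subset
    fun f ⟨hW, hV⟩ => ⟨fun v => ⟨f v, hW v v.2⟩, funext fun v => ?_⟩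
  by_cases hv : v ∈ V
  · simp [hv]
  · simp [hv, hV v hv]

theorem homSet_finite (G H : HGraph) : (homSet G H).Finite :=
  (finite_setOf_mapsTo_of_eq_zero H.verts G.verts).subset fun _ hf => ⟨hf.1.1, hf.2⟩

def surjSet (G H : HGraph) : Set (ℕ → ℕ) :=
  {f | H.verts.image f = G.verts ∧ H.edges.image (fun e => e.image f) = G.edges ∧
    ∀ v ∉ H.verts, f v = 0}

def surjCount (G H : HGraph) : ℕ := (surjSet G H).ncard

theorem surjSet_finite (G H : HGraph) : (surjSet G H).Finite :=
  (finite_setOf_mapsTo_of_eq_zero H.verts G.verts).subset fun f hf =>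
    ⟨fun _ hv => hf.1 ▸ Finset.mem_image_of_mem f hv, hf.2.2⟩

/-- Every homomorphism is onto the subhypergraph formed by its image. -/
theorem homCount_eq_sum_surjCount (G H : HGraph) :
    homCount G H = ∑ p ∈ G.verts.powerset ×ˢ G.edges.powerset, surjCount ⟨p.1, p.2⟩ H := by
  let img : (ℕ → ℕ) → Finset ℕ × Finset (Finset ℕ) := fun f =>
    (H.verts.image f, H.edges.image fun e => e.image f)
  have himg : ∀ f ∈ (homSet_finite G H).toFinset,
      img f ∈ G.verts.powerset ×ˢ G.edges.powerset := fun f hf => by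
    obtain ⟨⟨hv, he⟩, -⟩ := (homSet_finite G H).mem_toFinset.mp hf
    exact Finset.mem_product.mpr
      ⟨Finset.mem_powerset.mpr (Finset.image_subset_iff.mpr hv),
        Finset.mem_powerset.mpr (Finset.image_subset_iff.mpr he)⟩
  rw [homCount_eq_ncard_homSet, Set.ncard_eq_toFinset_card _ (homSet_finite G H),
    Finset.card_eq_sum_card_fiberwise himg]
  refine Finset.sum_congr rfl fun p hp => ?_
  obtain ⟨hpv, hpe⟩ := Finset.mem_product.mp hp
  rw [surjCount, Set.ncard_eq_toFinset_card _ (surjSet_finite _ H)]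
  congr 1
  ext f
  simp only [Finset.mem_filter, Set.Finite.mem_toFinset, homSet, surjSet, Set.mem_ofPred_eq,
    img, Prod.ext_iff]
  constructor
  · rintro ⟨⟨-, hf0⟩, hv, he⟩
    exact ⟨hv, he, hf0⟩
  · rintro ⟨hv, he, hf0⟩
    refine ⟨⟨⟨fun v h => ?_, fun e h => ?_⟩, hf0⟩, hv, he⟩
    · exact Finset.mem_powerset.mp hpv (hv ▸ Finset.mem_image_of_mem f h)
    · exact Finset.mem_powerset.mp hpe (he ▸ Finset.mem_image_of_mem _ h)

theorem surjCount_eq_zero_of_not_subset {A : HGraph} (hA : A.Good) {W : Finset ℕ}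
    {E : Finset (Finset ℕ)} {e : Finset ℕ} (he : e ∈ E) (heW : ¬ e ⊆ W) :
    surjCount ⟨W, E⟩ A = 0 := by
  rw [surjCount, Set.ncard_eq_zero (surjSet_finite _ A), Set.eq_empty_iff_forall_notMem]
  rintro f ⟨hv, he', -⟩
  subst hv he'
  obtain ⟨e₀, he₀, rfl⟩ := Finset.mem_image.mp he
  exact heW (Finset.image_subset_image (hA e₀ he₀).1)

/-- Möbius inversion of `homCount_eq_sum_surjCount` over the subhypergraphs of `C`. -/
theorem surjCount_eq_of_homCount_eq {A B : HGraph} (hA : A.Good) (hB : B.Good)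
    (h : ∀ F : HGraph, F.Good → homCount F A = homCount F B) {C : HGraph} (hC : C.Good) :
    surjCount C A = surjCount C B := by
  induction hn : C.verts.card + C.edges.card using Nat.strong_induction_on generalizing C with
  | _ n ih =>
  obtain ⟨V, E⟩ := C
  subst hn
  have hself : (V, E) ∈ V.powerset ×ˢ E.powerset := by simp
  have hproper : ∀ p ∈ (V.powerset ×ˢ E.powerset).erase (V, E),
      surjCount ⟨p.1, p.2⟩ A = surjCount ⟨p.1, p.2⟩ B := by
    rintro ⟨W, E'⟩ hp
    simp only [Finset.mem_erase, Finset.mem_product, Finset.mem_powerset, ne_eq,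
      Prod.mk.injEq] at hp
    obtain ⟨hne, hWV, hE'E⟩ := hp
    by_cases hgood : ∀ e ∈ E', e ⊆ W
    · refine ih _ ?_ (fun e he => ⟨hgood e he, (hC e (hE'E he)).2⟩) rfl
      have hE'card := Finset.card_le_card hE'E
      rcases hWV.eq_or_ssubset with rfl | hWV
      · have := Finset.card_lt_card (hE'E.ssubset_of_ne fun h => hne ⟨rfl, h⟩)
        simp only
        omega
      · have := Finset.card_lt_card hWV
        simp only
        omega
    · push Not at hgood
      obtain ⟨e, he, heW⟩ := hgood
      rw [surjCount_eq_zero_of_not_subset hA he heW, surjCount_eq_zero_of_not_subset hB he heW]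
  have hAB := h ⟨V, E⟩ hC
  rw [homCount_eq_sum_surjCount, homCount_eq_sum_surjCount, ← Finset.add_sum_erase _ _ hself,
    ← Finset.add_sum_erase _ _ hself, Finset.sum_congr rfl hproper] at hAB
  exact Nat.add_right_cancel hAB

theorem image_ite_mem_eq_self {s V : Finset ℕ} (h : s ⊆ V) :
    s.image (fun v => if v ∈ V then v else 0) = s := by
  conv_rhs => rw [← Finset.image_id (s := s)]
  exact Finset.image_congr fun v hv => if_pos (h hv)

theorem surjSet_self_nonempty {D : HGraph} (hD : D.Good) : (surjSet D D).Nonempty := by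
  refine ⟨fun v => if v ∈ D.verts then v else 0, image_ite_mem_eq_self subset_rfl, ?_,
    fun v hv => if_neg hv⟩
  conv_rhs => rw [← Finset.image_id (s := D.edges)]
  exact Finset.image_congr fun e he => image_ite_mem_eq_self (hD e he).1

theorem surjSet_nonempty_of_homCount_eq {A B : HGraph} (hA : A.Good) (hB : B.Good)
    (h : ∀ F : HGraph, F.Good → homCount F A = homCount F B) : (surjSet A B).Nonempty := by
  rw [← Set.ncard_pos (surjSet_finite A B), ← surjCount,
    ← surjCount_eq_of_homCount_eq hA hB h hA, surjCount, Set.ncard_pos (surjSet_finite A A)]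
  exact surjSet_self_nonempty hA

/-- A surjection `B → A` is injective on vertices, since a surjection `A → B` also exists. -/
theorem isomorphic_of_homCount_eq {A B : HGraph} (hA : A.Good) (hB : B.Good)
    (h : ∀ F : HGraph, F.Good → homCount F A = homCount F B) : Isomorphic B A := by
  obtain ⟨f, hfv, hfe, -⟩ := surjSet_nonempty_of_homCount_eq hA hB h
  obtain ⟨g, hgv, -, -⟩ :=
    surjSet_nonempty_of_homCount_eq hB hA fun F hF => (h F hF).symm
  have hcard : B.verts.card ≤ A.verts.card := hgv ▸ Finset.card_image_le
  have hinj : Set.InjOn f B.verts :=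
    Finset.card_image_iff.mp (le_antisymm Finset.card_image_le (hfv ▸ hcard))
  refine ⟨f, ⟨fun v hv => ?_, hinj, ?_⟩, hfe.symm⟩
  · exact hfv ▸ Finset.mem_image_of_mem f hv
  · rw [← hfv, Finset.coe_image]
    exact Set.surjOn_image _ _

namespace HGraph

def point : HGraph := ⟨{0}, {{0}}⟩

theorem point_good : point.Good := by
  simp [Good, point]

end HGraph

theorem homCount_point {H : HGraph} (hH : H.Good) : homCount HGraph.point H = 1 := by
  rw [homCount_eq_ncard_homSet, Set.ncard_eq_one]
  refine ⟨fun _ => 0, Set.eq_singleton_iff_unique_mem.mpr ⟨?_, ?_⟩⟩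
  · refine ⟨⟨fun _ _ => by simp [HGraph.point], fun e he => ?_⟩, fun _ _ => rfl⟩
    simp [HGraph.point, Finset.image_const (hH e he).2]
  · rintro f ⟨⟨hv, -⟩, hf0⟩
    funext v
    by_cases h : v ∈ H.verts
    · simpa [HGraph.point] using hv v h
    · exact hf0 v h

theorem pair_mem_tensor_verts {F G : HGraph} {a b : ℕ} :
    Nat.pair a b ∈ (tensor F G).verts ↔ a ∈ F.verts ∧ b ∈ G.verts := by
  simp [tensor, Nat.pair_eq_pair]

theorem mem_tensor_edges {F G : HGraph} {e : Finset ℕ} :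
    e ∈ (tensor F G).edges ↔ e ⊆ (tensor F G).verts ∧
      e.image (fun m => (Nat.unpair m).1) ∈ F.edges ∧
      e.image (fun m => (Nat.unpair m).2) ∈ G.edges := by
  simp only [tensor, Finset.mem_filter, Finset.mem_powerset]

theorem tensor_good {F G : HGraph} (hF : F.Good) : (tensor F G).Good := by
  intro e he
  obtain ⟨hsub, hF', -⟩ := mem_tensor_edges.mp he
  exact ⟨hsub, Finset.image_nonempty.mp (hF _ hF').2⟩

def pairOn (V : Finset ℕ) (f₁ f₂ : ℕ → ℕ) (v : ℕ) : ℕ :=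
  if v ∈ V then Nat.pair (f₁ v) (f₂ v) else 0

theorem image_fst_pairOn {V e : Finset ℕ} (he : e ⊆ V) (f₁ f₂ : ℕ → ℕ) :
    (e.image (pairOn V f₁ f₂)).image (fun m => (Nat.unpair m).1) = e.image f₁ := by
  rw [Finset.image_image]
  exact Finset.image_congr fun v hv => by simp [pairOn, he hv]

theorem image_snd_pairOn {V e : Finset ℕ} (he : e ⊆ V) (f₁ f₂ : ℕ → ℕ) :
    (e.image (pairOn V f₁ f₂)).image (fun m => (Nat.unpair m).2) = e.image f₂ := by
  rw [Finset.image_image]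
  exact Finset.image_congr fun v hv => by simp [pairOn, he hv]

theorem exists_pairOn_eq {V : Finset ℕ} {f : ℕ → ℕ} (hf : ∀ v ∉ V, f v = 0) :
    ∃ f₁ f₂ : ℕ → ℕ, (∀ v ∉ V, f₁ v = 0) ∧ (∀ v ∉ V, f₂ v = 0) ∧ pairOn V f₁ f₂ = f := by
  refine ⟨fun v => if v ∈ V then (Nat.unpair (f v)).1 else 0,
    fun v => if v ∈ V then (Nat.unpair (f v)).2 else 0,
    fun v hv => if_neg hv, fun v hv => if_neg hv, funext fun v => ?_⟩
  by_cases hv : v ∈ V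
  · simp [pairOn, hv]
  · simp [pairOn, hv, hf v hv]

theorem isHom_tensor_pairOn_iff {F G H : HGraph} (hH : H.Good) {f₁ f₂ : ℕ → ℕ} :
    IsHom H (tensor F G) (pairOn H.verts f₁ f₂) ↔ IsHom H F f₁ ∧ IsHom H G f₂ := by
  have hverts : ∀ v ∈ H.verts,
      pairOn H.verts f₁ f₂ v ∈ (tensor F G).verts ↔ f₁ v ∈ F.verts ∧ f₂ v ∈ G.verts :=
    fun v hv => by rw [pairOn, if_pos hv, pair_mem_tensor_verts]
  constructor
  · rintro ⟨hv, he⟩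
    refine ⟨⟨fun v h => ((hverts v h).mp (hv v h)).1, fun e h => ?_⟩,
      ⟨fun v h => ((hverts v h).mp (hv v h)).2, fun e h => ?_⟩⟩
    · rw [← image_fst_pairOn (hH e h).1 f₁ f₂]
      exact (mem_tensor_edges.mp (he e h)).2.1
    · rw [← image_snd_pairOn (hH e h).1 f₁ f₂]
      exact (mem_tensor_edges.mp (he e h)).2.2
  · rintro ⟨⟨hv₁, he₁⟩, ⟨hv₂, he₂⟩⟩
    have hv : ∀ v ∈ H.verts, pairOn H.verts f₁ f₂ v ∈ (tensor F G).verts :=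
      fun v h => (hverts v h).mpr ⟨hv₁ v h, hv₂ v h⟩
    refine ⟨hv, fun e h => mem_tensor_edges.mpr ⟨?_, ?_, ?_⟩⟩
    · exact Finset.image_subset_iff.mpr fun v hve => hv v ((hH e h).1 hve)
    · rw [image_fst_pairOn (hH e h).1]
      exact he₁ e h
    · rw [image_snd_pairOn (hH e h).1]
      exact he₂ e h

theorem homCount_tensor (F G : HGraph) {H : HGraph} (hH : H.Good) :
    homCount (tensor F G) H = homCount F H * homCount G H := by
  rw [homCount_eq_ncard_homSet, homCount_eq_ncard_homSet, homCount_eq_ncard_homSet,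
    ← Set.ncard_prod]
  symm
  refine Set.ncard_congr (fun p _ => pairOn H.verts p.1 p.2) ?_ ?_ ?_
  · rintro ⟨f₁, f₂⟩ ⟨⟨h₁, -⟩, ⟨h₂, -⟩⟩
    exact ⟨(isHom_tensor_pairOn_iff hH).mpr ⟨h₁, h₂⟩, fun v hv => if_neg hv⟩
  · rintro ⟨f₁, f₂⟩ ⟨f₁', f₂'⟩ ⟨⟨-, z₁⟩, ⟨-, z₂⟩⟩ ⟨⟨-, z₁'⟩, ⟨-, z₂'⟩⟩ h
    have hpair : ∀ v ∈ H.verts, f₁ v = f₁' v ∧ f₂ v = f₂' v := fun v hv => by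
      simpa [pairOn, hv, Nat.pair_eq_pair] using congrFun h v
    simp only [Prod.mk.injEq]
    constructor <;> funext v <;> by_cases hv : v ∈ H.verts
    · exact (hpair v hv).1
    · exact (z₁ v hv).trans (z₁' v hv).symm
    · exact (hpair v hv).2
    · exact (z₂ v hv).trans (z₂' v hv).symm
  · rintro f ⟨hf, hf0⟩
    obtain ⟨f₁, f₂, z₁, z₂, rfl⟩ := exists_pairOn_eq hf0
    obtain ⟨h₁, h₂⟩ := (isHom_tensor_pairOn_iff hH).mp hf
    exact ⟨(f₁, f₂), ⟨⟨h₁, z₁⟩, ⟨h₂, z₂⟩⟩, rfl⟩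

def homVectors {ι : Type*} (H : ι → HGraph) (hH : ∀ i, (H i).Good) : Submonoid (ι → ℚ) where
  carrier := {v | ∃ F : HGraph, F.Good ∧ v = fun i => (homCount F (H i) : ℚ)}
  one_mem' := ⟨HGraph.point, HGraph.point_good, by ext i; simp [homCount_point (hH i)]⟩
  mul_mem' := by
    rintro _ _ ⟨F, hF, rfl⟩ ⟨G, -, rfl⟩
    exact ⟨tensor F G, tensor_good hF, by ext i; simp [homCount_tensor F G (hH i)]⟩

theorem span_homVectors_eq_top {ι : Type*} [Fintype ι] (H : ι → HGraph) (hH : ∀ i, (H i).Good)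
    (hiso : ∀ i j, i ≠ j → ¬ Isomorphic (H i) (H j)) :
    Submodule.span ℚ (homVectors H hH : Set (ι → ℚ)) = ⊤ := by
  have hsep : ∀ i j, i ≠ j →
      ∃ v ∈ Algebra.adjoin ℚ (homVectors H hH : Set (ι → ℚ)), v i ≠ v j := by
    intro i j hij
    by_contra! hall
    refine hiso j i hij.symm (isomorphic_of_homCount_eq (hH i) (hH j) fun F hF => ?_)
    exact_mod_cast hall _ (Algebra.subset_adjoin ⟨F, hF, rfl⟩)
  rw [← Submonoid.closure_eq (homVectors H hH), ← Algebra.adjoin_eq_span,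
    Subalgebra.eq_top_of_separatesPoints _ hsep, Algebra.top_toSubmodule]

theorem stmt17 (k : ℕ) (Hs : Fin k → HGraph) (hHs : ∀ i, (Hs i).Good)
    (hiso : ∀ i j, i ≠ j → ¬ Isomorphic (Hs i) (Hs j))
    (c : Fin k → ℚ) (hc : ∀ i, c i ≠ 0) :
    ∃ F : Fin k → HGraph, (∀ i, (F i).Good) ∧
      IsUnit (Matrix.of fun i j : Fin k => c j * (homCount (F i) (Hs j) : ℚ)) := by
  obtain ⟨r, hr, hunit⟩ := exists_isUnit_matrix_of_span_eq_top (span_homVectors_eq_top Hs hHs hiso)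
  choose F hF hFr using hr
  refine ⟨F, hF, ?_⟩
  have hdiag : IsUnit (Matrix.diagonal c) :=
    Matrix.isUnit_diagonal.mpr (Pi.isUnit_iff.mpr fun i => (hc i).isUnit)
  have hM : (Matrix.of fun i j : Fin k => c j * (homCount (F i) (Hs j) : ℚ))
      = Matrix.of r * Matrix.diagonal c := by
    ext i j
    simp [hFr i, mul_comm]
  rw [hM]
  exact hunit.mul hdiag

end
end
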